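/- arXiv:2406.19174 — 2 statements merged into one kernel-verified Lean document; each statement's English description precedes it below -/
import Mathlib

section
/- Let f : Ω × ℝⁿ → ℝ with f(x,·) ∈ C² satisfying m(1+|ξ|²)^{(p-2)/2}|λ|² ≤ ⟨f_{ξξ}(x,ξ)λ,λ⟩ for all ξ,λ. Then for all x ∈ Ω and ξ,η ∈ ℝⁿ: f(x,ξ) + f(x,η) ≥ 2f(x,(ξ+η)/2) + c|((ξ−η)/2)|²(1 + |(ξ+η)/2|² + |(ξ−η)/2|²)^{(p-2)/2}, where c > 0 depends only on m and p. -/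
/-!
Restrict `F = f x` to the line `t ↦ μ + t • ν` through `μ = (ξ + η) / 2` in direction
`ν = (ξ - η) / 2`. The even function `h t = F (μ + t • ν) + F (μ - t • ν)` has `h' 0 = 0` and
`h'' ≥ 0`. For `t ∈ [1/2, 1]` the parallelogram law puts the larger of `1 + ‖μ ± t • ν‖ ^ 2`
between `W / 4` and `2 W`, where `W = 1 + ‖μ‖ ^ 2 + ‖ν‖ ^ 2`, so there
`h'' ≥ K := m · min ((1/4) ^ s) (2 ^ s) · W ^ s · ‖ν‖ ^ 2` with `s = (p - 2) / 2`, whatever the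
sign of `s`. Integrating twice gives `h 1 - h 0 ≥ K / 8`, which is the claim.
-/

open Set

lemma min_rpow_mul_rpow_le_rpow {l u a b s : ℝ} (hl : 0 < l) (ha : 0 < a)
    (hlb : l * a ≤ b) (hbu : b ≤ u * a) : min (l ^ s) (u ^ s) * a ^ s ≤ b ^ s := by
  have hb : 0 < b := (mul_pos hl ha).trans_le hlb
  have hu : 0 ≤ u := nonneg_of_mul_nonneg_left (hb.le.trans hbu) ha
  rcases le_total 0 s with hs | hs
  · calc min (l ^ s) (u ^ s) * a ^ s ≤ l ^ s * a ^ s := by gcongr; exact min_le_left _ _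
      _ = (l * a) ^ s := (Real.mul_rpow hl.le ha.le).symm
      _ ≤ b ^ s := Real.rpow_le_rpow (by positivity) hlb hs
  · calc min (l ^ s) (u ^ s) * a ^ s ≤ u ^ s * a ^ s := by gcongr; exact min_le_right _ _
      _ = (u * a) ^ s := (Real.mul_rpow hu ha.le).symm
      _ ≤ b ^ s := Real.rpow_le_rpow_of_nonpos hb hbu hs

lemma min_rpow_mul_rpow_le_rpow_add_rpow {a b W s : ℝ} (ha : 0 < a) (hb : 0 < b) (hW : 0 < W)
    (hlow : W / 2 ≤ a + b) (hupp : a + b ≤ 2 * W) :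
    min ((1 / 4) ^ s) (2 ^ s) * W ^ s ≤ a ^ s + b ^ s := by
  wlog hba : b ≤ a generalizing a b
  · simpa only [add_comm] using this hb ha (by linarith) (by linarith) (le_of_not_ge hba)
  calc min ((1 / 4) ^ s) (2 ^ s) * W ^ s ≤ a ^ s :=
        min_rpow_mul_rpow_le_rpow (by norm_num) hW (by linarith) (by linarith)
    _ ≤ a ^ s + b ^ s := le_add_of_nonneg_right (Real.rpow_nonneg hb.le s)

lemma monotoneOn_Icc_of_hasDerivAt_nonneg {f f' : ℝ → ℝ} {a b : ℝ}
    (hf : ∀ t, HasDerivAt f (f' t) t) (hf' : ∀ t ∈ Icc a b, 0 ≤ f' t) :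
    MonotoneOn f (Icc a b) :=
  monotoneOn_of_hasDerivWithinAt_nonneg (convex_Icc a b)
    (fun t _ ↦ (hf t).continuousAt.continuousWithinAt) (fun t _ ↦ (hf t).hasDerivWithinAt)
    fun t ht ↦ hf' t (interior_subset ht)

/-- Taylor's formula `h 1 - h 0 = ∫₀¹ (1 - t) h'' t` (when `h' 0 = 0`), with only `[1/2, 1]`
contributing to the lower bound. -/
lemma add_div_eight_le_of_hasDerivAt {h h' h'' : ℝ → ℝ} {K : ℝ}
    (hh : ∀ t, HasDerivAt h (h' t) t) (hh' : ∀ t, HasDerivAt h' (h'' t) t) (h'0 : h' 0 = 0)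
    (h''_nonneg : ∀ t ∈ Icc (0 : ℝ) 1, 0 ≤ h'' t) (hK : ∀ t ∈ Icc (1 / 2 : ℝ) 1, K ≤ h'' t) :
    h 0 + K / 8 ≤ h 1 := by
  have h'_nonneg : ∀ t ∈ Icc (0 : ℝ) 1, 0 ≤ h' t := fun t ht ↦
    h'0 ▸ monotoneOn_Icc_of_hasDerivAt_nonneg hh' h''_nonneg ⟨le_rfl, zero_le_one⟩ ht ht.1
  have h_half : h 0 ≤ h (1 / 2) :=
    monotoneOn_Icc_of_hasDerivAt_nonneg hh h'_nonneg (by norm_num) (by norm_num) (by norm_num)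
  -- `h - K/2 (t - 1/2)²` is nondecreasing on `[1/2, 1]`
  have hψ : ∀ t, HasDerivAt (fun t ↦ h t - K / 2 * (t - 1 / 2) ^ 2) (h' t - K * (t - 1 / 2)) t :=
    fun t ↦ ((hh t).sub ((((hasDerivAt_id' t).sub_const (1 / 2)).pow 2).const_mul (K / 2))).congr_deriv
      (by ring)
  have hψ' : ∀ t, HasDerivAt (fun t ↦ h' t - K * (t - 1 / 2)) (h'' t - K) t :=
    fun t ↦ ((hh' t).sub (((hasDerivAt_id' t).sub_const (1 / 2)).const_mul K)).congr_deriv (by ring)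
  have hψ'_nonneg : ∀ t ∈ Icc (1 / 2 : ℝ) 1, 0 ≤ h' t - K * (t - 1 / 2) := fun t ht ↦ by
    have hmono := monotoneOn_Icc_of_hasDerivAt_nonneg hψ' (fun t ht ↦ sub_nonneg.2 (hK t ht))
      (left_mem_Icc.2 (by norm_num)) ht ht.1
    have := h'_nonneg (1 / 2) (by norm_num)
    simp only [sub_self, mul_zero, sub_zero] at hmono
    linarith
  have hψ_mono := monotoneOn_Icc_of_hasDerivAt_nonneg hψ hψ'_nonneg
    (left_mem_Icc.2 (by norm_num)) (right_mem_Icc.2 (by norm_num)) (by norm_num)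
  norm_num at hψ_mono
  linarith

lemma hasDerivAt_add_comp_neg {g g' : ℝ → ℝ} (hg : ∀ t, HasDerivAt g (g' t) t) (t : ℝ) :
    HasDerivAt (fun t ↦ g t + g (-t)) (g' t - g' (-t)) t :=
  ((hg t).add ((hg (-t)).comp t (hasDerivAt_neg t))).congr_deriv (by ring)

lemma hasDerivAt_sub_comp_neg {g g' : ℝ → ℝ} (hg : ∀ t, HasDerivAt g (g' t) t) (t : ℝ) :
    HasDerivAt (fun t ↦ g t - g (-t)) (g' t + g' (-t)) t :=
  ((hg t).sub ((hg (-t)).comp t (hasDerivAt_neg t))).congr_deriv (by ring)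

section InnerProductSpace

variable {E : Type*} [NormedAddCommGroup E] [InnerProductSpace ℝ E]

lemma min_rpow_mul_rpow_le_rpow_add_rpow_of_mem_Icc (s : ℝ) (μ ν : E) {t : ℝ}
    (ht : t ∈ Icc (1 / 2 : ℝ) 1) :
    min ((1 / 4) ^ s) (2 ^ s) * (1 + ‖μ‖ ^ 2 + ‖ν‖ ^ 2) ^ s ≤
      (1 + ‖μ + t • ν‖ ^ 2) ^ s + (1 + ‖μ + (-t) • ν‖ ^ 2) ^ s := by
  have hpar : ‖μ + t • ν‖ ^ 2 + ‖μ + (-t) • ν‖ ^ 2 = 2 * (‖μ‖ ^ 2 + t ^ 2 * ‖ν‖ ^ 2) := by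
    rw [neg_smul, ← sub_eq_add_neg, parallelogram_law_with_norm ℝ, norm_smul, mul_pow,
      Real.norm_eq_abs, sq_abs]
  have ht2 : 1 / 4 ≤ t ^ 2 ∧ t ^ 2 ≤ 1 := by
    obtain ⟨h1, h2⟩ := ht
    constructor <;> nlinarith
  have hν := sq_nonneg ‖ν‖
  apply min_rpow_mul_rpow_le_rpow_add_rpow (by positivity) (by positivity) (by positivity)
  · nlinarith
  · nlinarith

lemma hasDerivAt_comp_add_smul {V : Type*} [NormedAddCommGroup V] [NormedSpace ℝ V] {φ : E → V}
    (hφ : Differentiable ℝ φ) (μ ν : E) (t : ℝ) :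
    HasDerivAt (fun t : ℝ ↦ φ (μ + t • ν)) (fderiv ℝ φ (μ + t • ν) ν) t := by
  have hline : HasDerivAt (fun t : ℝ ↦ μ + t • ν) ν t := by
    simpa using ((hasDerivAt_id t).smul_const ν).const_add μ
  exact (hφ _).hasFDerivAt.comp_hasDerivAt t hline

variable {F : E → ℝ} {m s : ℝ}

theorem le_add_sub_two_mul_of_hessian_lower_bound (hF : ContDiff ℝ 2 F) (hm : 0 ≤ m)
    (hHess : ∀ ξ v : E, m * (1 + ‖ξ‖ ^ 2) ^ s * ‖v‖ ^ 2 ≤ fderiv ℝ (fderiv ℝ F) ξ v v)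
    (μ ν : E) :
    m * min ((1 / 4) ^ s) (2 ^ s) / 8 * ‖ν‖ ^ 2 * (1 + ‖μ‖ ^ 2 + ‖ν‖ ^ 2) ^ s ≤
      F (μ + ν) + F (μ - ν) - 2 * F μ := by
  set G : ℝ → ℝ := fun t ↦ fderiv ℝ F (μ + t • ν) ν
  set H : ℝ → ℝ := fun t ↦ fderiv ℝ (fderiv ℝ F) (μ + t • ν) ν ν
  have hg : ∀ t, HasDerivAt (fun t ↦ F (μ + t • ν)) (G t) t :=
    hasDerivAt_comp_add_smul (hF.differentiable two_ne_zero) μ ν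
  have hG : ∀ t, HasDerivAt G (H t) t := fun t ↦ by
    have hdF := (hF.fderiv_right (m := 1) le_rfl).differentiable one_ne_zero
    simpa using (hasDerivAt_comp_add_smul hdF μ ν t).clm_apply (hasDerivAt_const t ν)
  have hH_nonneg : ∀ t, 0 ≤ H t := fun t ↦ le_trans (by positivity) (hHess (μ + t • ν) ν)
  have hK : ∀ t ∈ Icc (1 / 2 : ℝ) 1,
      m * min ((1 / 4) ^ s) (2 ^ s) * (1 + ‖μ‖ ^ 2 + ‖ν‖ ^ 2) ^ s * ‖ν‖ ^ 2 ≤ H t + H (-t) := by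
    intro t ht
    have hsum := mul_le_mul_of_nonneg_left
      (min_rpow_mul_rpow_le_rpow_add_rpow_of_mem_Icc s μ ν ht) (mul_nonneg hm (sq_nonneg ‖ν‖))
    have h₁ := hHess (μ + t • ν) ν
    have h₂ := hHess (μ + (-t) • ν) ν
    linarith
  have key := add_div_eight_le_of_hasDerivAt (hasDerivAt_add_comp_neg hg)
    (hasDerivAt_sub_comp_neg hG) (by simp) (fun t _ ↦ add_nonneg (hH_nonneg t) (hH_nonneg (-t))) hK
  simp only [neg_zero, zero_smul, add_zero, neg_smul, one_smul, ← sub_eq_add_neg] at key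
  linarith

end InnerProductSpace

theorem stmt3_general (n : ℕ) (p m : ℝ) (hm : 0 < m)
    (Ω : Set (EuclideanSpace ℝ (Fin n)))
    (f : EuclideanSpace ℝ (Fin n) → EuclideanSpace ℝ (Fin n) → ℝ)
    (hfC2 : ∀ x ∈ Ω, ContDiff ℝ 2 (f x))
    (hH2 : ∀ x ∈ Ω, ∀ ξ lam : EuclideanSpace ℝ (Fin n),
      m * (1 + ‖ξ‖ ^ 2) ^ ((p - 2) / 2) * ‖lam‖ ^ 2 ≤ fderiv ℝ (fderiv ℝ (f x)) ξ lam lam) :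
    ∃ c > 0, ∀ x ∈ Ω, ∀ ξ η : EuclideanSpace ℝ (Fin n),
      f x ξ + f x η ≥ 2 * f x (((1:ℝ)/2) • (ξ + η)) +
        c * ‖((1:ℝ)/2) • (ξ - η)‖ ^ 2 *
          (1 + ‖((1:ℝ)/2) • (ξ + η)‖ ^ 2 + ‖((1:ℝ)/2) • (ξ - η)‖ ^ 2) ^ ((p - 2) / 2) := by
  refine ⟨m * min ((1 / 4) ^ ((p - 2) / 2)) (2 ^ ((p - 2) / 2)) / 8,
    by positivity, fun x hx ξ η ↦ ?_⟩
  have key := le_add_sub_two_mul_of_hessian_lower_bound (hfC2 x hx) hm.le (hH2 x hx)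
    ((1 / 2 : ℝ) • (ξ + η)) ((1 / 2 : ℝ) • (ξ - η))
  rw [show (1 / 2 : ℝ) • (ξ + η) + (1 / 2 : ℝ) • (ξ - η) = ξ by module,
    show (1 / 2 : ℝ) • (ξ + η) - (1 / 2 : ℝ) • (ξ - η) = η by module] at key
  linarith

theorem stmt3 (n : ℕ) (p m : ℝ) (hp : 1 < p) (hm : 0 < m)
    (Ω : Set (EuclideanSpace ℝ (Fin n))) (hΩopen : IsOpen Ω)
    (f : EuclideanSpace ℝ (Fin n) → EuclideanSpace ℝ (Fin n) → ℝ)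
    (hfC2 : ∀ x ∈ Ω, ContDiff ℝ 2 (f x))
    (hH2 : ∀ x ∈ Ω, ∀ ξ lam : EuclideanSpace ℝ (Fin n),
      m * (1 + ‖ξ‖ ^ 2) ^ ((p - 2) / 2) * ‖lam‖ ^ 2 ≤ fderiv ℝ (fderiv ℝ (f x)) ξ lam lam) :
    ∃ c > 0, ∀ x ∈ Ω, ∀ ξ η : EuclideanSpace ℝ (Fin n),
      f x ξ + f x η ≥ 2 * f x (((1:ℝ)/2) • (ξ + η)) +
        c * ‖((1:ℝ)/2) • (ξ - η)‖ ^ 2 *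
          (1 + ‖((1:ℝ)/2) • (ξ + η)‖ ^ 2 + ‖((1:ℝ)/2) • (ξ - η)‖ ^ 2) ^ ((p - 2) / 2) :=
  stmt3_general n p m hm Ω f hfC2 hH2
end

section
/- Let f_h(x,ξ) = Σ_{l=1}^{N} φ_l(x) f(x_l, ξ) where φ_l are C¹ nonnegative functions with Σ_l φ_l(x) = 1 on an open set U, |Dφ_l(x)| ≤ Ch for all l, the points x_l satisfy |x_l − x_1| ≤ c(n)/h, and f satisfies |f_ξ(x,ξ) − f_ξ(y,ξ)| ≤ K|x−y|(1+|ξ|²)^{(q-1)/2}. Then |D_x f_{h,ξ}(x,ξ)| ≤ N C c(n) K (1+|ξ|²)^{(q-1)/2} for all x ∈ U and ξ ∈ ℝⁿ, with constant independent of h. -/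
/-!
Differentiating `z ↦ ∑ φ_l(z) A_l` gives `∑ Dφ_l(x) ⊗ A_l`. Where the `φ_l` sum to `1` their
differentials sum to `0`, so `A_l` may be replaced by `A_l - A_1`. With `A_l = f_ξ(x_l, ξ)`, the
Lipschitz bound in `x` makes `|A_l - A_1| ≤ K (c/h) (1 + |ξ|²)^((q-1)/2)`, and the factor `1/h`
cancels the factor `h` in `|Dφ_l| ≤ C h`.
-/

open Filter Topology

section PartitionOfUnity

variable {𝕜 E F ι : Type*} [NontriviallyNormedField 𝕜] [NormedAddCommGroup E] [NormedSpace 𝕜 E]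
  [NormedAddCommGroup F] [NormedSpace 𝕜 F] [Fintype ι] {φ : ι → E → 𝕜} {x : E}

theorem sum_fderiv_eq_zero_of_sum_eventuallyEq_one (hφ : ∀ l, DifferentiableAt 𝕜 (φ l) x)
    (hsum : (fun z => ∑ l, φ l z) =ᶠ[𝓝 x] fun _ => 1) : ∑ l, fderiv 𝕜 (φ l) x = 0 := by
  rw [← fderiv_fun_sum fun l _ => hφ l, hsum.fderiv_eq, fderiv_const_apply]

theorem hasFDerivAt_sum_smul_const_of_sum_eq_zero {φ' : ι → E →L[𝕜] 𝕜}
    (hφ : ∀ l, HasFDerivAt (φ l) (φ' l) x) (hsum : ∑ l, φ' l = 0) (A : ι → F) (l₀ : ι) :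
    HasFDerivAt (fun z => ∑ l, φ l z • A l) (∑ l, (φ' l).smulRight (A l - A l₀)) x := by
  convert HasFDerivAt.fun_sum fun l _ => (hφ l).smul_const (A l) using 1
  ext v
  have hsum_v : ∑ l, φ' l v = 0 := by simpa using congrArg (· v) hsum
  simp only [sum_apply, ContinuousLinearMap.smulRight_apply, smul_sub,
    Finset.sum_sub_distrib, ← Finset.sum_smul, hsum_v, zero_smul, sub_zero]

theorem norm_sum_smulRight_le {a : ι → E →L[𝕜] 𝕜} {b : ι → F} {M₁ M₂ : ℝ}
    (ha : ∀ l, ‖a l‖ ≤ M₁) (hb : ∀ l, ‖b l‖ ≤ M₂) :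
    ‖∑ l, (a l).smulRight (b l)‖ ≤ Fintype.card ι * (M₁ * M₂) := by
  refine (norm_sum_le _ _).trans ?_
  refine (Finset.sum_le_card_nsmul _ _ (M₁ * M₂) fun l _ => ?_).trans_eq (by simp)
  rw [ContinuousLinearMap.norm_smulRight_apply]
  exact mul_le_mul (ha l) (hb l) (norm_nonneg _) ((norm_nonneg _).trans (ha l))

end PartitionOfUnity

theorem stmt13_general (n N : ℕ) (hN : 0 < N) (q K C c h : ℝ) (hK : 0 < K)
    (hh : 0 < h)
    (U : Set (EuclideanSpace ℝ (Fin n))) (hU : IsOpen U)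
    (f : EuclideanSpace ℝ (Fin n) → EuclideanSpace ℝ (Fin n) → ℝ)
    (φ : Fin N → EuclideanSpace ℝ (Fin n) → ℝ)
    (pts : Fin N → EuclideanSpace ℝ (Fin n))
    (hφC1 : ∀ l, ContDiff ℝ 1 (φ l))
    (hφsum : ∀ x ∈ U, ∑ l, φ l x = 1)
    (hφgrad : ∀ l x, ‖fderiv ℝ (φ l) x‖ ≤ C * h)
    (hpts : ∀ l, ‖pts l - pts ⟨0, hN⟩‖ ≤ c / h)
    (hH4 : ∀ x y : EuclideanSpace ℝ (Fin n), ∀ ξ : EuclideanSpace ℝ (Fin n),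
      ‖fderiv ℝ (f x) ξ - fderiv ℝ (f y) ξ‖ ≤ K * ‖x - y‖ * (1 + ‖ξ‖ ^ 2) ^ ((q - 1) / 2)) :
    ∀ x ∈ U, ∀ ξ : EuclideanSpace ℝ (Fin n),
      ‖fderiv ℝ (fun z => ∑ l, φ l z • fderiv ℝ (f (pts l)) ξ) x‖
        ≤ N * C * c * K * (1 + ‖ξ‖ ^ 2) ^ ((q - 1) / 2) := by
  intro x hx ξ
  set P := (1 + ‖ξ‖ ^ 2) ^ ((q - 1) / 2)
  have hφ : ∀ l, DifferentiableAt ℝ (φ l) x :=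
    fun l => ((hφC1 l).differentiable one_ne_zero).differentiableAt
  have hDφ_sum : ∑ l, fderiv ℝ (φ l) x = 0 :=
    sum_fderiv_eq_zero_of_sum_eventuallyEq_one hφ
      (eventuallyEq_of_mem (hU.mem_nhds hx) hφsum)
  have hA : ∀ l, ‖fderiv ℝ (f (pts l)) ξ - fderiv ℝ (f (pts ⟨0, hN⟩)) ξ‖ ≤ K * (c / h) * P :=
    fun l => (hH4 _ _ ξ).trans (by gcongr; exact hpts l)
  rw [(hasFDerivAt_sum_smul_const_of_sum_eq_zero (fun l => (hφ l).hasFDerivAt) hDφ_sum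
    (fun l => fderiv ℝ (f (pts l)) ξ) ⟨0, hN⟩).fderiv]
  refine (norm_sum_smulRight_le (fun l => hφgrad l x) hA).trans_eq ?_
  rw [Fintype.card_fin]
  field_simp

theorem stmt13 (n N : ℕ) (hN : 0 < N) (q K C c h : ℝ) (hq : 1 < q) (hK : 0 < K)
    (hC : 0 < C) (hc : 0 < c) (hh : 0 < h)
    (Ω U : Set (EuclideanSpace ℝ (Fin n))) (hU : IsOpen U) (hUΩ : U ⊆ Ω)
    (f : EuclideanSpace ℝ (Fin n) → EuclideanSpace ℝ (Fin n) → ℝ)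
    (hfC1 : ∀ x, ContDiff ℝ 1 (f x))
    (φ : Fin N → EuclideanSpace ℝ (Fin n) → ℝ)
    (pts : Fin N → EuclideanSpace ℝ (Fin n))
    (hφC1 : ∀ l, ContDiff ℝ 1 (φ l))
    (hφnn : ∀ l x, 0 ≤ φ l x)
    (hφsum : ∀ x ∈ U, ∑ l, φ l x = 1)
    (hφgrad : ∀ l x, ‖fderiv ℝ (φ l) x‖ ≤ C * h)
    (hpts : ∀ l, ‖pts l - pts ⟨0, hN⟩‖ ≤ c / h)
    (hH4 : ∀ x y : EuclideanSpace ℝ (Fin n), ∀ ξ : EuclideanSpace ℝ (Fin n),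
      ‖fderiv ℝ (f x) ξ - fderiv ℝ (f y) ξ‖ ≤ K * ‖x - y‖ * (1 + ‖ξ‖ ^ 2) ^ ((q - 1) / 2)) :
    ∀ x ∈ U, ∀ ξ : EuclideanSpace ℝ (Fin n),
      ‖fderiv ℝ (fun z => ∑ l, φ l z • fderiv ℝ (f (pts l)) ξ) x‖
        ≤ N * C * c * K * (1 + ‖ξ‖ ^ 2) ^ ((q - 1) / 2) :=
  stmt13_general n N hN q K C c h hK hh U hU f φ pts hφC1 hφsum hφgrad hpts hH4
end
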